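/- arXiv:1112.0620 — 2 statements merged into one kernel-verified Lean document; each statement's English description precedes it below -/
import Mathlib

section
/- (Image of the Brauer antisymmetrizer, orthogonal case.) Let N = 2n and Y = diag(y_1, …, y_n, −y_n, …, −y_1), or N = 2n+1 and Y = diag(y_1, …, y_n, 0, −y_n, …, −y_1), and let l ≥ 1 satisfy 2l ≤ n. Then (1/(2l)!)^2 · Σ_{σ ∈ S_{2l}} sgn(σ) · tr(P_σ · Y_1 Y_2 ⋯ Y_{2l}) = ((−1)^l/(2l)!) · Σ_{1 ≤ i_1 < ⋯ < i_l ≤ n} y_{i_1}^2 ⋯ y_{i_l}^2, the trace being over (ℂ^N)^{⊗2l}. -/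
open Finset

noncomputable section

/-- The operator on `(ℂ^N)^{⊗m}` permuting the tensor factors according to `σ`. -/
def Pperm {N m : ℕ} (σ : Equiv.Perm (Fin m)) :
    Matrix (Fin m → Fin N) (Fin m → Fin N) ℂ :=
  Matrix.of fun I J => if I = fun a => J (σ⁻¹ a) then 1 else 0

/-- The operator `(X 0)_1 (X 1)_2 ⋯ (X (m-1))_m` on `(ℂ^N)^{⊗m}`. -/
def embAll {N m : ℕ} (X : Fin m → Matrix (Fin N) (Fin N) ℂ) :
    Matrix (Fin m → Fin N) (Fin m → Fin N) ℂ :=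
  Matrix.of fun I J => ∏ a, X a (I a) (J a)

/-- The diagonal entries of `Y = diag(y_1, …, y_n, -y_n, …, -y_1)` (for `N = 2n`)
or `Y = diag(y_1, …, y_n, 0, -y_n, …, -y_1)` (for `N = 2n+1`), 0-indexed. -/
def diagEnt (N n : ℕ) (y : ℕ → ℂ) : Fin N → ℂ :=
  fun i => if (i : ℕ) < n then y i
    else if N - n ≤ (i : ℕ) then -y (N - 1 - (i : ℕ)) else 0

/-!
Expanding the trace, `∑_σ sgn σ · tr (P_σ A^{⊗m})` is the sum of the minors `det A_{I,I}` over all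
tuples `I : Fin m → Fin N`. For diagonal `A` such a minor vanishes unless `I` is injective, so the
sum is `m! · e_m(d)`, with `d` the diagonal of `A`. The diagonal of `Y` consists of the pairs
`±y_j` (and one `0` when `N` is odd), so `∏_i (X + d_i) = X^(N-2n) ∏_j (X² - y_j²)`, and Vieta's
formulas turn this into `e_{2l}(d) = (-1)^l e_l(y_1², …, y_n²)`.
-/

open Polynomial Nat

section InjectiveTuples
variable {ι R : Type*} [Fintype ι] [DecidableEq ι] [CommSemiring R]

lemma card_injective_tuples_with_image {m : ℕ} {S : Finset ι} (hS : #S = m) :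
    #{I : Fin m → ι | Function.Injective I ∧ univ.image I = S} = m ! := by
  have enum : Fin m ≃ S := (S.equivFinOfCardEq hS).symm
  rw [show m ! = #(univ : Finset (Fin m ≃ S)) by
    rw [Finset.card_univ, Fintype.card_equiv enum, Fintype.card_fin]]
  symm
  refine card_bij (fun e _ a => (e a : ι)) (fun e _ => ?_) (fun e₁ _ e₂ _ h => ?_) fun I hI => ?_
  · refine mem_filter.mpr ⟨mem_univ _, Subtype.val_injective.comp e.injective, ?_⟩
    ext x
    simp only [mem_image, mem_univ, true_and]
    exact ⟨by rintro ⟨a, rfl⟩; exact (e a).2, fun hx => ⟨e.symm ⟨x, hx⟩, by simp⟩⟩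
  · exact Equiv.ext fun a => Subtype.ext (congrFun h a)
  · obtain ⟨hinj, himage⟩ := (mem_filter.mp hI).2
    have hmem : ∀ a, I a ∈ S := fun a => himage ▸ mem_image_of_mem I (mem_univ a)
    have hbij : Function.Bijective fun a => (⟨I a, hmem a⟩ : S) :=
      (Fintype.bijective_iff_injective_and_card _).mpr
        ⟨fun a b h => hinj (congrArg Subtype.val h), by simp [hS]⟩
    exact ⟨Equiv.ofBijective _ hbij, mem_univ _, rfl⟩

theorem sum_injective_tuples_prod (f : ι → R) (m : ℕ) :
    ∑ I : Fin m → ι with Function.Injective I, ∏ a, f (I a) =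
      m ! * ∑ S ∈ powersetCard m univ, ∏ i ∈ S, f i := by
  have hmaps : ∀ I ∈ ({I : Fin m → ι | Function.Injective I} : Finset _),
      univ.image I ∈ powersetCard m (univ : Finset ι) := fun I hI =>
    mem_powersetCard.mpr ⟨subset_univ _, by
      rw [card_image_of_injective _ (mem_filter.mp hI).2, Finset.card_univ, Fintype.card_fin]⟩
  rw [← sum_fiberwise_of_maps_to hmaps, mul_sum]
  refine sum_congr rfl fun S hS => ?_
  have hprod : ∀ I ∈ ({I : Fin m → ι | Function.Injective I ∧ univ.image I = S} : Finset _),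
      ∏ a, f (I a) = ∏ i ∈ S, f i := fun I hI => by
    obtain ⟨hinj, rfl⟩ := (mem_filter.mp hI).2
    exact (prod_image fun a _ b _ h => hinj h).symm
  rw [filter_filter, sum_congr rfl hprod, sum_const,
    card_injective_tuples_with_image (mem_powersetCard.mp hS).2, nsmul_eq_mul]

end InjectiveTuples

lemma Matrix.det_submatrix_diagonal {ι κ R : Type*} [DecidableEq ι] [Fintype κ] [DecidableEq κ]
    [CommRing R] (d : ι → R) (I : κ → ι) :
    ((Matrix.diagonal d).submatrix I I).det = if Function.Injective I then ∏ a, d (I a) else 0 := by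
  split_ifs with hI
  · rw [Matrix.submatrix_diagonal d I hI, Matrix.det_diagonal]
    rfl
  · obtain ⟨a, b, hab, hne⟩ := Function.not_injective_iff.mp hI
    exact Matrix.det_zero_of_row_eq hne (funext fun c => by simp [hab])

lemma trace_Pperm_mul_embAll {N m : ℕ} (σ : Equiv.Perm (Fin m))
    (X : Fin m → Matrix (Fin N) (Fin N) ℂ) :
    (Pperm σ * embAll X).trace = ∑ I : Fin m → Fin N, ∏ a, X a (I (σ a)) (I a) := by
  refine sum_congr rfl fun I _ => ?_
  rw [Matrix.diag_apply, Matrix.mul_apply, sum_eq_single (I ∘ σ)]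
  · simp [Pperm, embAll, Function.comp_def]
  · intro J _ hJ
    have hPJ : Pperm σ I J = 0 := if_neg fun h => hJ (funext fun a => by simp [h])
    rw [hPJ, zero_mul]
  · exact fun h => absurd (mem_univ _) h

lemma sum_sign_mul_trace_Pperm_mul_embAll {N m : ℕ} (A : Matrix (Fin N) (Fin N) ℂ) :
    ∑ σ : Equiv.Perm (Fin m), ((Equiv.Perm.sign σ : ℤ) : ℂ) * (Pperm σ * embAll fun _ => A).trace =
      ∑ I : Fin m → Fin N, (A.submatrix I I).det := by
  simp_rw [trace_Pperm_mul_embAll, mul_sum]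
  rw [sum_comm]
  refine sum_congr rfl fun I _ => ?_
  rw [Matrix.det_apply']
  rfl

lemma prod_X_add_C_diagEnt {N n : ℕ} (hnN : 2 * n ≤ N) (y : ℕ → ℂ) :
    ∏ i : Fin N, (X + C (diagEnt N n y i)) =
      X ^ (N - 2 * n) * expand ℂ 2 (∏ j ∈ range n, (X + C (-y j ^ 2))) := by
  set f : ℕ → ℂ[X] := fun k => X + C (if k < n then y k
    else if N - n ≤ k then -y (N - 1 - k) else 0)
  have hlo : ∀ k ∈ range n, f k = X + C (y k) := fun k hk => by
    simp only [f]
    rw [if_pos (mem_range.mp hk)]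
  have hmid : ∀ k ∈ range (N - 2 * n), f (n + k) = X := fun k hk => by
    have := mem_range.mp hk
    simp only [f]
    rw [if_neg (by omega), if_neg (by omega), C_0, add_zero]
  have hhi : ∀ k ∈ range n, f (n + (N - 2 * n + k)) = X + C (-y (n - 1 - k)) := fun k hk => by
    have := mem_range.mp hk
    simp only [f]
    rw [if_neg (by omega), if_pos (by omega),
      show N - 1 - (n + (N - 2 * n + k)) = n - 1 - k by omega]
  rw [show ∏ i : Fin N, (X + C (diagEnt N n y i)) = ∏ i : Fin N, f i from rfl,
    Fin.prod_univ_eq_prod_range f N, show range N = range (n + ((N - 2 * n) + n)) by congr 1; omega,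
    prod_range_add, prod_range_add, prod_congr rfl hlo, prod_congr rfl hmid, prod_congr rfl hhi,
    prod_const, card_range, prod_range_reflect (fun k => X + C (-y k)) n, mul_left_comm,
    ← prod_mul_distrib, map_prod]
  congr 1
  refine prod_congr rfl fun j _ => ?_
  rw [map_add, expand_X, expand_C]
  simp only [map_neg, map_pow]
  ring

lemma sum_powersetCard_prod_diagEnt {N n l : ℕ} (hnN : 2 * n ≤ N) (hln : l ≤ n) (y : ℕ → ℂ) :
    ∑ S ∈ powersetCard (2 * l) univ, ∏ i ∈ S, diagEnt N n y i =
      (-1) ^ l * ∑ s ∈ powersetCard l (range n), ∏ i ∈ s, y i ^ 2 := by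
  have vieta := Finset.prod_X_add_C_coeff univ (diagEnt N n y) (k := N - 2 * l)
    (by rw [Finset.card_univ, Fintype.card_fin]; omega)
  rw [Finset.card_univ, Fintype.card_fin, Nat.sub_sub_self (by omega), prod_X_add_C_diagEnt hnN,
    show N - 2 * l = 2 * (n - l) + (N - 2 * n) by omega, coeff_X_pow_mul,
    coeff_expand_mul' two_pos, Finset.prod_X_add_C_coeff _ _ (by rw [card_range]; omega),
    card_range, Nat.sub_sub_self hln] at vieta
  rw [← vieta, mul_sum]
  refine sum_congr rfl fun s hs => ?_
  rw [prod_neg, (mem_powersetCard.mp hs).2]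

theorem ch_brauer_antisymmetrizer_orthogonal_general (n l N : ℕ)
    (hln : 2 * l ≤ n) (hN : N = 2 * n ∨ N = 2 * n + 1) (y : ℕ → ℂ) :
    (1 / ((2 * l).factorial : ℂ)) ^ 2 *
        ∑ σ : Equiv.Perm (Fin (2 * l)), ((Equiv.Perm.sign σ : ℤ) : ℂ) *
          Matrix.trace (Pperm σ *
            embAll (fun _ : Fin (2 * l) => Matrix.diagonal (diagEnt N n y))) =
      ((-1 : ℂ) ^ l / ((2 * l).factorial : ℂ)) *
        ∑ s ∈ Finset.powersetCard l (Finset.range n), ∏ i ∈ s, (y i) ^ 2 := by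
  have hnN : 2 * n ≤ N := by omega
  rw [sum_sign_mul_trace_Pperm_mul_embAll]
  simp_rw [Matrix.det_submatrix_diagonal]
  rw [← sum_filter, sum_injective_tuples_prod, sum_powersetCard_prod_diagEnt hnN (by omega)]
  field_simp

/-- Image of the Brauer antisymmetrizer under the characteristic map, orthogonal case:
`(1/(2l)!)² Σ_σ sgn(σ) tr (P_σ Y_1 ⋯ Y_{2l}) = ((-1)^l/(2l)!) e_l(y_1², …, y_n²)`. -/
theorem ch_brauer_antisymmetrizer_orthogonal (n l N : ℕ) (hl : 1 ≤ l)
    (hln : 2 * l ≤ n) (hN : N = 2 * n ∨ N = 2 * n + 1) (y : ℕ → ℂ) :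
    (1 / ((2 * l).factorial : ℂ)) ^ 2 *
        ∑ σ : Equiv.Perm (Fin (2 * l)), ((Equiv.Perm.sign σ : ℤ) : ℂ) *
          Matrix.trace (Pperm σ *
            embAll (fun _ : Fin (2 * l) => Matrix.diagonal (diagEnt N n y))) =
      ((-1 : ℂ) ^ l / ((2 * l).factorial : ℂ)) *
        ∑ s ∈ Finset.powersetCard l (Finset.range n), ∏ i ∈ s, (y i) ^ 2 :=
  ch_brauer_antisymmetrizer_orthogonal_general n l N hln hN y

end
end

section
/- For m ≥ 2 and N ≥ 1, the orthogonal Jucys–Murphy operators on (ℂ^N)^{⊗m} satisfy the two relations: (i) Q_{m−1,m} · x_m = − Q_{m−1,m} · x_{m−1}, and (ii) P_{m−1,m} · x_m = x_{m−1} · P_{m−1,m} + 1 − Q_{m−1,m}. -/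
open Finset

noncomputable section

/-- `P_{ab}`, interchanging tensor factors `a` and `b`. -/
def Pmat {N m : ℕ} (a b : Fin m) : Matrix (Fin m → Fin N) (Fin m → Fin N) ℂ :=
  Pperm (Equiv.swap a b)

/-- The orthogonal contraction operator `Q_{ab} = Σ_{i,j} (e_{ij})_a (e_{i'j'})_b`,
where `i' = N+1-i` (which is `Fin.rev` in 0-indexed terms). -/
def Qo {N m : ℕ} (a b : Fin m) : Matrix (Fin m → Fin N) (Fin m → Fin N) ℂ :=
  Matrix.of fun I J =>
    (if I b = (I a).rev ∧ J b = (J a).rev then (1 : ℂ) else 0) *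
      ∏ c ∈ Finset.univ \ {a, b}, (if I c = J c then (1 : ℂ) else 0)

/-- The orthogonal Jucys–Murphy operators
`x_b = ((N-1)/2)·1 + Σ_{a<b} (P_{ab} - Q_{ab})` on `(ℂ^N)^{⊗m}`. -/
def xO (N m : ℕ) (b : Fin m) : Matrix (Fin m → Fin N) (Fin m → Fin N) ℂ :=
  (((N : ℂ) - 1) / 2) • 1 +
    ∑ a ∈ Finset.univ.filter (· < b), (Pmat a b - Qo a b)

/-!
Every identity reduces to relations in the Brauer algebra between `P_{ab}` and `Q_{ab}` for
distinct indices. Conjugating by a permutation operator relabels tensor factors,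
`P_σ P_{ab} = P_{σa σb} P_σ` and `P_σ Q_{ab} = Q_{σa σb} P_σ`, which moves `P_{uv}` past every
term of `x_v`. The only genuine contractions are `Q_{uv}² = N Q_{uv}` and
`Q_{uv} P_{av} = Q_{uv} Q_{au}`, read off from the entrywise formula for `Q_{uv} M` as a sum over
the contracted index; the symmetry `Q_{uv} = Q_{vu}` turns the latter into
`Q_{uv} Q_{av} = Q_{uv} P_{au}`. Expanding `x_v = (N-1)/2 + P_{uv} - Q_{uv} + Σ_{a<u} (P_{av} - Q_{av})`
then gives both relations, the scalar coming from `(N-1)/2 + 1 - N = -(N-1)/2`.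
-/

section

variable {N m : ℕ}

abbrev TensorEnd (N m : ℕ) := Matrix (Fin m → Fin N) (Fin m → Fin N) ℂ

lemma Pperm_apply (σ : Equiv.Perm (Fin m)) (I J : Fin m → Fin N) :
    (Pperm σ : TensorEnd N m) I J = if J = I ∘ σ then 1 else 0 := by
  simp only [Pperm, Matrix.of_apply, Equiv.Perm.inv_def]
  exact if_congr ((Equiv.eq_comp_symm σ I J).trans eq_comm) rfl rfl

lemma Pperm_mul_apply (σ : Equiv.Perm (Fin m)) (M : TensorEnd N m) (I J : Fin m → Fin N) :
    (Pperm σ * M : TensorEnd N m) I J = M (I ∘ σ) J := by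
  simp [Matrix.mul_apply, Pperm_apply]

lemma mul_Pperm_apply (σ : Equiv.Perm (Fin m)) (M : TensorEnd N m) (I J : Fin m → Fin N) :
    (M * Pperm σ : TensorEnd N m) I J = M I (J ∘ σ.symm) := by
  rw [Matrix.mul_apply, Finset.sum_eq_single (J ∘ σ.symm)]
  · simp [Pperm_apply, Function.comp_assoc]
  · intro K _ hK
    rw [Pperm_apply, if_neg, mul_zero]
    rintro rfl
    exact hK (by ext; simp)
  · simp

lemma Pperm_mul_Pperm (σ τ : Equiv.Perm (Fin m)) :
    (Pperm σ * Pperm τ : TensorEnd N m) = Pperm (σ * τ) := by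
  ext I J
  rw [Pperm_mul_apply, Pperm_apply, Pperm_apply]
  rfl

lemma Pperm_one : (Pperm 1 : TensorEnd N m) = 1 := by
  ext I J
  simp [Pperm_apply, Matrix.one_apply, eq_comm]

lemma Qo_apply (a b : Fin m) (I J : Fin m → Fin N) :
    (Qo a b : TensorEnd N m) I J =
      if I b = (I a).rev ∧ J b = (J a).rev ∧ ∀ c, c ≠ a → c ≠ b → I c = J c then 1 else 0 := by
  simp only [Qo, Matrix.of_apply, prod_boole, ite_zero_mul_ite_zero, mul_one, and_assoc, mem_sdiff,
    mem_univ, true_and, mem_insert, mem_singleton, not_or, and_imp]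

lemma Qo_comm (a b : Fin m) : (Qo a b : TensorEnd N m) = Qo b a := by
  ext I J
  simp only [Qo_apply]
  grind [Fin.rev_rev]

lemma Pperm_mul_Qo (σ : Equiv.Perm (Fin m)) (a b : Fin m) :
    (Pperm σ * Qo a b : TensorEnd N m) = Qo (σ a) (σ b) * Pperm σ := by
  ext I J
  rw [Pperm_mul_apply, mul_Pperm_apply, Qo_apply, Qo_apply]
  simp only [Function.comp_apply, Equiv.symm_apply_apply]
  refine if_congr (and_congr_right' (and_congr_right' ?_)) rfl rfl
  conv_rhs => rw [σ.symm.forall_congr_left]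
  simp

lemma Pperm_mul_Pmat (σ : Equiv.Perm (Fin m)) (a b : Fin m) :
    (Pperm σ * Pmat a b : TensorEnd N m) = Pmat (σ a) (σ b) * Pperm σ := by
  simp only [Pmat, Pperm_mul_Pperm, Equiv.swap_apply_apply, inv_mul_cancel_right]

lemma Pmat_mul_self (a b : Fin m) : (Pmat a b * Pmat a b : TensorEnd N m) = 1 := by
  rw [Pmat, Pperm_mul_Pperm, Equiv.swap_mul_self, Pperm_one]

lemma Qo_mul_Pmat_self (a b : Fin m) : (Qo a b * Pmat a b : TensorEnd N m) = Qo a b := by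
  ext I J
  rw [Pmat, mul_Pperm_apply, Qo_apply, Qo_apply, Equiv.symm_swap]
  refine if_congr (and_congr_right' (and_congr ?_ (forall₃_congr fun c hca hcb => ?_))) rfl rfl
  · simp only [Function.comp_apply, Equiv.swap_apply_left, Equiv.swap_apply_right]
    grind [Fin.rev_rev]
  · rw [Function.comp_apply, Equiv.swap_apply_of_ne_of_ne hca hcb]

lemma Qo_mul_apply {u v : Fin m} (huv : u ≠ v) (M : TensorEnd N m) (I J : Fin m → Fin N) :
    (Qo u v * M : TensorEnd N m) I J = if I v = (I u).rev then
      ∑ k, M (Function.update (Function.update I u k) v k.rev) J else 0 := by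
  set e : Fin N → Fin m → Fin N := fun k => Function.update (Function.update I u k) v k.rev
  have he : Function.Injective e := fun k l h => by
    simpa [e, Function.update_of_ne huv] using congrFun h u
  have hQe (k : Fin N) : Qo u v I (e k) = if I v = (I u).rev then 1 else 0 := by
    rw [Qo_apply]
    refine if_congr ?_ rfl rfl
    simp +contextual [e, Function.update_of_ne huv, Function.update_of_ne]
  have hQ_range (K : Fin m → Fin N) (hK : K ∉ Set.range e) : Qo u v I K = 0 := by
    rw [Qo_apply, if_neg]
    rintro ⟨-, hKv, hIK⟩
    refine hK ⟨K u, funext fun c => ?_⟩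
    by_cases hcv : c = v
    · simp [e, hcv, hKv]
    by_cases hcu : c = u
    · simp [e, hcu, huv]
    · simp [e, hcu, hcv, hIK c hcu hcv]
  rw [Matrix.mul_apply, ← Fintype.sum_of_injective e he (fun k => Qo u v I (e k) * M (e k) J) _
    (fun K hK => by rw [hQ_range K hK, zero_mul]) fun _ => rfl]
  simp only [hQe, ite_mul, one_mul, zero_mul, Finset.sum_ite_irrel, Finset.sum_const_zero, e]

lemma Qo_mul_Qo_self {u v : Fin m} (huv : u ≠ v) :
    (Qo u v * Qo u v : TensorEnd N m) = (N : ℂ) • Qo u v := by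
  ext I J
  have hsummand (k : Fin N) : Qo u v (Function.update (Function.update I u k) v k.rev) J =
      if J v = (J u).rev ∧ ∀ c, c ≠ u → c ≠ v → I c = J c then 1 else 0 := by
    rw [Qo_apply]
    refine if_congr ?_ rfl rfl
    simp +contextual [Function.update_of_ne huv, Function.update_of_ne]
  rw [Qo_mul_apply huv, Matrix.smul_apply, Qo_apply]
  simp only [hsummand, sum_const, card_univ, Fintype.card_fin, nsmul_eq_mul, ite_and]
  split_ifs <;> simp

lemma Qo_mul_Pmat {a u v : Fin m} (hau : a ≠ u) (hav : a ≠ v) (huv : u ≠ v) :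
    (Qo u v * Pmat a v : TensorEnd N m) = Qo u v * Qo a u := by
  ext I J
  have hsummand (k : Fin N) : Qo a u (Function.update (Function.update I u k) v k.rev) J =
      if k = (I a).rev then
        if J u = (J a).rev ∧ J v = I a ∧ ∀ c, c ≠ a → c ≠ u → c ≠ v → I c = J c then 1 else 0
      else 0 := by
    rw [Qo_apply, ← ite_and]
    refine if_congr ?_ rfl rfl
    simp only [Function.update_apply, if_neg hav, if_neg hau]
    grind [Fin.rev_rev]
  rw [Pmat, mul_Pperm_apply, Qo_mul_apply huv, Qo_apply, Equiv.symm_swap]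
  simp only [hsummand, Finset.sum_ite_eq', mem_univ, if_true]
  rw [← ite_and]
  refine if_congr ?_ rfl rfl
  simp only [Function.comp_apply, Equiv.swap_apply_right, Equiv.swap_apply_of_ne_of_ne hau.symm huv]
  grind [Equiv.swap_apply_of_ne_of_ne, Fin.rev_rev]

lemma Qo_mul_Qo {a u v : Fin m} (hau : a ≠ u) (hav : a ≠ v) (huv : u ≠ v) :
    (Qo u v * Qo a v : TensorEnd N m) = Qo u v * Pmat a u := by
  rw [Qo_comm u v, Qo_mul_Pmat hav hau huv.symm]

lemma Pmat_mul_Qo_self (a b : Fin m) : (Pmat a b * Qo a b : TensorEnd N m) = Qo a b := by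
  rw [Pmat, Pperm_mul_Qo, Equiv.swap_apply_left, Equiv.swap_apply_right, Qo_comm, ← Pmat,
    Qo_mul_Pmat_self]

lemma Pmat_mul_Qo {a u v : Fin m} (hau : a ≠ u) (hav : a ≠ v) :
    (Pmat u v * Qo a v : TensorEnd N m) = Qo a u * Pmat u v := by
  rw [Pmat, Pperm_mul_Qo, Equiv.swap_apply_of_ne_of_ne hau hav, Equiv.swap_apply_right]

lemma Pmat_mul_Pmat {a u v : Fin m} (hau : a ≠ u) (hav : a ≠ v) :
    (Pmat u v * Pmat a v : TensorEnd N m) = Pmat a u * Pmat u v := by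
  rw [Pmat, Pperm_mul_Pmat, Equiv.swap_apply_of_ne_of_ne hau hav, Equiv.swap_apply_right]

section Consecutive

variable {u v : Fin m} (h : (u : ℕ) + 1 = v)
include h

lemma xO_of_succ :
    xO N m v = (((N : ℂ) - 1) / 2) • 1 + (Pmat u v - Qo u v) +
      ∑ a ∈ univ.filter (· < u), (Pmat a v - Qo a v) := by
  have hfilter : univ.filter (· < v) = insert u (univ.filter (· < u)) := by
    ext x
    simp only [mem_filter, mem_univ, true_and, mem_insert, Fin.lt_def, Fin.ext_iff]
    omega
  rw [xO, hfilter, sum_insert (by simp), add_assoc]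

lemma ne_of_mem_filter_lt_of_succ {a : Fin m} (ha : a ∈ univ.filter (· < u)) : a ≠ u ∧ a ≠ v := by
  rw [mem_filter, Fin.lt_def] at ha
  exact ⟨Fin.ne_of_val_ne (by omega), Fin.ne_of_val_ne (by omega)⟩

lemma Qo_mul_xO_of_succ : (Qo u v * xO N m v : TensorEnd N m) = -(Qo u v * xO N m u) := by
  have huv : u ≠ v := Fin.ne_of_val_ne (by omega)
  have hterm : ∀ a ∈ univ.filter (· < u), (Qo u v * (Pmat a v - Qo a v) : TensorEnd N m) =
      -(Qo u v * (Pmat a u - Qo a u)) := fun a ha => by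
    obtain ⟨hau, hav⟩ := ne_of_mem_filter_lt_of_succ h ha
    rw [mul_sub, mul_sub, Qo_mul_Pmat hau hav huv, Qo_mul_Qo hau hav huv, neg_sub]
  calc (Qo u v * xO N m v : TensorEnd N m)
      = (((N : ℂ) - 1) / 2) • Qo u v + (Qo u v * Pmat u v - Qo u v * Qo u v) +
          ∑ a ∈ univ.filter (· < u), Qo u v * (Pmat a v - Qo a v) := by
        rw [xO_of_succ h, mul_add, mul_add, mul_sub, Matrix.mul_smul, mul_one, mul_sum]
    _ = (((N : ℂ) - 1) / 2) • Qo u v + (Qo u v - (N : ℂ) • Qo u v) -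
          ∑ a ∈ univ.filter (· < u), Qo u v * (Pmat a u - Qo a u) := by
        rw [Qo_mul_Pmat_self, Qo_mul_Qo_self huv, sum_congr rfl hterm, sum_neg_distrib,
          ← sub_eq_add_neg]
    _ = -(Qo u v * xO N m u) := by
        rw [xO, mul_add, Matrix.mul_smul, mul_one, mul_sum]
        module

lemma Pmat_mul_xO_of_succ :
    (Pmat u v * xO N m v : TensorEnd N m) = xO N m u * Pmat u v + 1 - Qo u v := by
  have hterm : ∀ a ∈ univ.filter (· < u), (Pmat u v * (Pmat a v - Qo a v) : TensorEnd N m) =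
      (Pmat a u - Qo a u) * Pmat u v := fun a ha => by
    obtain ⟨hau, hav⟩ := ne_of_mem_filter_lt_of_succ h ha
    rw [mul_sub, sub_mul, Pmat_mul_Pmat hau hav, Pmat_mul_Qo hau hav]
  calc (Pmat u v * xO N m v : TensorEnd N m)
      = (((N : ℂ) - 1) / 2) • Pmat u v + (Pmat u v * Pmat u v - Pmat u v * Qo u v) +
          ∑ a ∈ univ.filter (· < u), Pmat u v * (Pmat a v - Qo a v) := by
        rw [xO_of_succ h, mul_add, mul_add, mul_sub, Matrix.mul_smul, mul_one, mul_sum]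
    _ = (((N : ℂ) - 1) / 2) • Pmat u v + (1 - Qo u v) +
          ∑ a ∈ univ.filter (· < u), (Pmat a u - Qo a u) * Pmat u v := by
        rw [Pmat_mul_self, Pmat_mul_Qo_self, sum_congr rfl hterm]
    _ = xO N m u * Pmat u v + 1 - Qo u v := by
        rw [xO, add_mul, Matrix.smul_mul, one_mul, sum_mul]
        abel

end Consecutive

end

/-- The relations `Q_{m-1,m} x_m = -Q_{m-1,m} x_{m-1}` and
`P_{m-1,m} x_m = x_{m-1} P_{m-1,m} + 1 - Q_{m-1,m}`. -/
theorem jucysMurphy_relations (N m : ℕ) (hm : 2 ≤ m) :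
    (Qo (⟨m - 2, by omega⟩ : Fin m) ⟨m - 1, by omega⟩ * xO N m ⟨m - 1, by omega⟩ =
      -(Qo (⟨m - 2, by omega⟩ : Fin m) ⟨m - 1, by omega⟩ * xO N m ⟨m - 2, by omega⟩)) ∧
    (Pmat (⟨m - 2, by omega⟩ : Fin m) ⟨m - 1, by omega⟩ * xO N m ⟨m - 1, by omega⟩ =
      xO N m ⟨m - 2, by omega⟩ * Pmat (⟨m - 2, by omega⟩ : Fin m) ⟨m - 1, by omega⟩
        + 1 - Qo (⟨m - 2, by omega⟩ : Fin m) ⟨m - 1, by omega⟩) := by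
  have h : m - 2 + 1 = m - 1 := by omega
  exact ⟨Qo_mul_xO_of_succ h, Pmat_mul_xO_of_succ h⟩

end
end
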